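/- arXiv:2304.06837 — 9 statements merged into one kernel-verified Lean document; each statement's English description precedes it below -/
import Mathlib

section
/- Let X be a finite set with closure operators φ₁, φ₂ whose families of closed sets are F₁ and F₂ respectively. If F₁ ⊊ F₂, then there exists a quasi-closed set Q of the system (X, φ₁) with Q ∈ F₂. -/
variable {X : Type*}

/-- A closure operator: extensive, monotone, idempotent. -/
def IsClosureOp (φ : Set X → Set X) : Prop :=
  (∀ A, A ⊆ φ A) ∧ (∀ A B : Set X, A ⊆ B → φ A ⊆ φ B) ∧ (∀ A, φ (φ A) = φ A)

/-- `S` obeys an implication `(A, B)` iff `A ⊆ S → B ⊆ S`. -/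
def Obeys (S : Set X) (p : Set X × Set X) : Prop := p.1 ⊆ S → p.2 ⊆ S

/-- Family of sets obeying every implication in `Sig`. -/
def ObeyFam (Sig : Set (Set X × Set X)) : Set (Set X) := {S | ∀ p ∈ Sig, Obeys S p}

/-- Family of `φ`-closed sets. -/
def ClosedFam (φ : Set X → Set X) : Set (Set X) := {S | φ S = S}

/-- `Q` is quasi-closed for `φ`. -/
def QuasiClosed (φ : Set X → Set X) (Q : Set X) : Prop :=
  Q ∉ ClosedFam φ ∧ ∀ S ∈ ClosedFam φ, Q ⊆ S ∨ Q ∩ S ∈ ClosedFam φ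

/-!
Take `Q` minimal among the `φ₂`-closed sets that are not `φ₁`-closed; it exists since `X` is
finite and `F₁ ⊊ F₂`. For `S ∈ F₁ ⊆ F₂`, the set `Q ∩ S` is again `φ₂`-closed, so if it is a
proper subset of `Q` then minimality forces it to be `φ₁`-closed.
-/

theorem IsClosureOp.inter_mem_closedFam {φ : Set X → Set X} (hφ : IsClosureOp φ)
    {A B : Set X} (hA : A ∈ ClosedFam φ) (hB : B ∈ ClosedFam φ) :
    A ∩ B ∈ ClosedFam φ := by
  obtain ⟨le_closure, closure_mono, -⟩ := hφ
  refine subset_antisymm (Set.subset_inter ?_ ?_) (le_closure _)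
  · exact (closure_mono _ _ Set.inter_subset_left).trans hA.subset
  · exact (closure_mono _ _ Set.inter_subset_right).trans hB.subset

theorem subset_or_inter_mem_of_minimal_diff {F G : Set (Set X)} {Q : Set X}
    (hQ : Minimal (· ∈ G \ F) Q) {S : Set X} (hQS : Q ∩ S ∈ G) :
    Q ⊆ S ∨ Q ∩ S ∈ F := by
  by_contra! hcon
  have hsub : Q ∩ S ⊆ Q := Set.inter_subset_left
  have heq : Q ∩ S = Q := le_antisymm hsub (hQ.2 ⟨hQS, hcon.2⟩ hsub)
  exact hcon.1 (heq ▸ Set.inter_subset_right)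

theorem quasiClosed_of_minimal_diff {φ₁ φ₂ : Set X → Set X} (h₂ : IsClosureOp φ₂)
    (h : ClosedFam φ₁ ⊆ ClosedFam φ₂) {Q : Set X}
    (hQ : Minimal (· ∈ ClosedFam φ₂ \ ClosedFam φ₁) Q) :
    QuasiClosed φ₁ Q :=
  ⟨hQ.1.2, fun _ hS ↦
    subset_or_inter_mem_of_minimal_diff hQ (h₂.inter_mem_closedFam hQ.1.1 (h hS))⟩

theorem stmt4_general [Finite X] (φ₁ φ₂ : Set X → Set X)
    (h₂ : IsClosureOp φ₂)
    (h : ClosedFam φ₁ ⊂ ClosedFam φ₂) :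
    ∃ Q, QuasiClosed φ₁ Q ∧ Q ∈ ClosedFam φ₂ := by
  obtain ⟨Q, hQ⟩ := (Set.toFinite (ClosedFam φ₂ \ ClosedFam φ₁)).exists_minimal
    (Set.sdiff_nonempty.2 h.2)
  exact ⟨Q, quasiClosed_of_minimal_diff h₂ h.1 hQ, hQ.1.1⟩

theorem stmt4 [Finite X] (φ₁ φ₂ : Set X → Set X)
    (h₁ : IsClosureOp φ₁) (h₂ : IsClosureOp φ₂)
    (h : ClosedFam φ₁ ⊂ ClosedFam φ₂) :
    ∃ Q, QuasiClosed φ₁ Q ∧ Q ∈ ClosedFam φ₂ :=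
  stmt4_general φ₁ φ₂ h₂ h
end

section
/- Let (X, φ) be a finite closure system with closed sets F, and let Σ be a set of implications on X with induced closed-set family F_Σ. If (1) for every implication (A → B) ∈ Σ we have B ⊆ φ(A), and (2) for every quasi-closed set Q of (X, φ) there exists (A → B) ∈ Σ with A ⊆ Q and B ⊄ Q, then F_Σ = F. -/
/-!
Closed sets obey `Σ` because `B ⊆ φ A`. Conversely, a minimal set that obeys `Σ` but is not
closed is quasi-closed: meeting it with a closed set not containing it gives a smaller set that
still obeys `Σ`, hence is closed. Condition (2) then yields an implication of `Σ` it violates.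
-/

variable {X : Type*}

theorem IsClosureOp.monotone {φ : Set X → Set X} (hφ : IsClosureOp φ) : Monotone φ :=
  fun A B hAB => hφ.2.1 A B hAB

theorem Obeys.inter {S T : Set X} {p : Set X × Set X} (hS : Obeys S p) (hT : Obeys T p) :
    Obeys (S ∩ T) p :=
  fun h => Set.subset_inter (hS (h.trans Set.inter_subset_left))
    (hT (h.trans Set.inter_subset_right))

theorem inter_mem_obeyFam {Sig : Set (Set X × Set X)} {S T : Set X}
    (hS : S ∈ ObeyFam Sig) (hT : T ∈ ObeyFam Sig) : S ∩ T ∈ ObeyFam Sig :=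
  fun p hp => (hS p hp).inter (hT p hp)

theorem closedFam_subset_obeyFam {φ : Set X → Set X} (hφ : Monotone φ)
    {Sig : Set (Set X × Set X)} (hSig : ∀ p ∈ Sig, p.2 ⊆ φ p.1) :
    ClosedFam φ ⊆ ObeyFam Sig := by
  intro S hS p hp hA
  calc p.2 ⊆ φ p.1 := hSig p hp
    _ ⊆ φ S := hφ hA
    _ = S := hS

theorem quasiClosed_of_minimal {φ : Set X → Set X} (hφ : Monotone φ)
    {Sig : Set (Set X × Set X)} (hSig : ∀ p ∈ Sig, p.2 ⊆ φ p.1) {Q : Set X}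
    (hQ : Q ∈ ObeyFam Sig) (hQφ : Q ∉ ClosedFam φ)
    (hmin : ∀ T ⊂ Q, T ∈ ObeyFam Sig → T ∈ ClosedFam φ) : QuasiClosed φ Q := by
  refine ⟨hQφ, fun W hW => or_iff_not_imp_left.2 fun hQW => hmin _ ?_ ?_⟩
  · exact Set.inter_ssubset_left_iff.2 hQW
  · exact inter_mem_obeyFam hQ (closedFam_subset_obeyFam hφ hSig hW)

theorem stmt6 [Finite X] (φ : Set X → Set X) (hφ : IsClosureOp φ)
    (Sig : Set (Set X × Set X))
    (h1 : ∀ p ∈ Sig, p.2 ⊆ φ p.1)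
    (h2 : ∀ Q, QuasiClosed φ Q → ∃ p ∈ Sig, p.1 ⊆ Q ∧ ¬ p.2 ⊆ Q) :
    ObeyFam Sig = ClosedFam φ := by
  refine Set.Subset.antisymm ?_ (closedFam_subset_obeyFam hφ.monotone h1)
  intro S
  induction S using WellFoundedLT.induction with
  | ind Q ih =>
    intro hQ
    by_contra hQφ
    obtain ⟨p, hp, hA, hB⟩ := h2 Q
      (quasiClosed_of_minimal hφ.monotone h1 hQ hQφ ih)
    exact hB (hQ p hp hA)
end

section
/- Let (X, φ) be a finite closure system with closed sets F, and let Σ be a set of implications on X with induced closed-set family F_Σ. If F_Σ = F, then (1) every implication (A → B) ∈ Σ satisfies B ⊆ φ(A), and (2) for every quasi-closed set Q of (X, φ) there is an implication (A → B) ∈ Σ with A ⊆ Q and B ⊄ Q. -/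
variable {X : Type*}

theorem subset_closure_of_closedFam_subset_obeyFam {φ : Set X → Set X}
    (hext : ∀ A, A ⊆ φ A) (hidem : ∀ A, φ (φ A) = φ A) {Sig : Set (Set X × Set X)}
    (h : ClosedFam φ ⊆ ObeyFam Sig) {p : Set X × Set X} (hp : p ∈ Sig) :
    p.2 ⊆ φ p.1 :=
  h (hidem p.1) p hp (hext p.1)

theorem exists_violated_of_obeyFam_subset_closedFam {φ : Set X → Set X}
    {Sig : Set (Set X × Set X)} (h : ObeyFam Sig ⊆ ClosedFam φ) {Q : Set X}
    (hQ : Q ∉ ClosedFam φ) : ∃ p ∈ Sig, p.1 ⊆ Q ∧ ¬ p.2 ⊆ Q := by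
  by_contra! hobeys
  exact hQ (h hobeys)

theorem stmt7_general (φ : Set X → Set X) (hφ : IsClosureOp φ)
    (Sig : Set (Set X × Set X))
    (h : ObeyFam Sig = ClosedFam φ) :
    (∀ p ∈ Sig, p.2 ⊆ φ p.1) ∧
    (∀ Q, QuasiClosed φ Q → ∃ p ∈ Sig, p.1 ⊆ Q ∧ ¬ p.2 ⊆ Q) := by
  obtain ⟨hext, -, hidem⟩ := hφ
  exact ⟨fun _ hp => subset_closure_of_closedFam_subset_obeyFam hext hidem h.ge hp,
    fun _ hQ => exists_violated_of_obeyFam_subset_closedFam h.le hQ.1⟩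

theorem stmt7 [Finite X] (φ : Set X → Set X) (hφ : IsClosureOp φ)
    (Sig : Set (Set X × Set X))
    (h : ObeyFam Sig = ClosedFam φ) :
    (∀ p ∈ Sig, p.2 ⊆ φ p.1) ∧
    (∀ Q, QuasiClosed φ Q → ∃ p ∈ Sig, p.1 ⊆ Q ∧ ¬ p.2 ⊆ Q) :=
  stmt7_general φ hφ Sig h
end

section
/- Let Q be a quasi-closed set of a closure system (X, φ) and let A ⊆ Q with φ(A) ⊄ Q. Then φ(A) = φ(Q). -/
variable {X : Type*}

namespace IsClosureOp

variable {φ : Set X → Set X}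

theorem closure_eq_closure_of_subset_of_subset_closure (hφ : IsClosureOp φ) {A Q : Set X}
    (hAQ : A ⊆ Q) (hQA : Q ⊆ φ A) : φ A = φ Q :=
  (hφ.2.1 A Q hAQ).antisymm (hφ.2.2 A ▸ hφ.2.1 Q (φ A) hQA)

theorem closure_subset_of_subset_of_mem_closedFam (hφ : IsClosureOp φ) {A S : Set X}
    (hS : S ∈ ClosedFam φ) (hAS : A ⊆ S) : φ A ⊆ S :=
  (hφ.2.1 A S hAS).trans_eq hS

end IsClosureOp

theorem stmt10 (φ : Set X → Set X) (hφ : IsClosureOp φ)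
    (Q : Set X) (hQ : QuasiClosed φ Q)
    (A : Set X) (hA : A ⊆ Q) (h : ¬ φ A ⊆ Q) :
    φ A = φ Q := by
  rcases hQ.2 (φ A) (hφ.2.2 A) with hQA | hinter
  · exact hφ.closure_eq_closure_of_subset_of_subset_closure hA hQA
  · have hAinter : A ⊆ Q ∩ φ A := Set.subset_inter hA (hφ.1 A)
    exact absurd ((hφ.closure_subset_of_subset_of_mem_closedFam hinter hAinter).trans
      Set.inter_subset_left) h
end

section
/- (Interchangeability of implication groups.) Let (X, φ) be a finite closure system, let E₁, …, Eₙ be its essential sets, and let Σ₁, …, Σₙ each be implication bases for (X, φ). For each i, let Σᵢ' = {(A → B) ∈ Σᵢ : φ(A) = Eᵢ}. Then Σ = Σ₁' ∪ ⋯ ∪ Σₙ' is again an implication basis for (X, φ). -/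
/-!
Closed sets obey every implication of the union, since each of its implications belongs to some
basis `Σᵢ`. Conversely, a non-closed set obeying the union that is minimal under inclusion is
quasi-closed, because the family of sets obeying an implication set is closed under intersection.
Any basis `Σᵢ` has an implication `A → B` violated by a quasi-closed `Q`, and `φ A = φ Q`
necessarily: otherwise `Q ∩ φ A` would be closed, contain `A`, and miss part of `B`. Taking `i`
with `Eᵢ = φ Q`, this implication survives in `Σᵢ'`, so `Q` does not obey the union.
-/

variable {X : Type*}

theorem QuasiClosed.exists_not_obeys {φ : Set X → Set X} (hφ : IsClosureOp φ) {Q : Set X}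
    (hQ : QuasiClosed φ Q) {Sig : Set (Set X × Set X)} (hSig : ObeyFam Sig = ClosedFam φ) :
    ∃ p ∈ Sig, φ p.1 = φ Q ∧ ¬ Obeys Q p := by
  obtain ⟨hext, hmono, hidem⟩ := hφ
  obtain ⟨p, hp, hviol⟩ : ∃ p ∈ Sig, ¬ Obeys Q p := by
    simpa [← hSig, ObeyFam] using hQ.1
  have hA : p.1 ⊆ Q := (Classical.not_imp.1 hviol).1
  refine ⟨p, hp, ?_, hviol⟩
  by_contra hne
  have hQA : ¬ Q ⊆ φ p.1 := fun h =>
    hne ((hmono _ _ hA).antisymm ((hmono _ _ h).trans (hidem p.1).le))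
  have hclosed : Q ∩ φ p.1 ∈ ObeyFam Sig := hSig ▸ (hQ.2 _ (hidem p.1)).resolve_left hQA
  exact hviol fun _ => (hclosed p hp (Set.subset_inter hA (hext p.1))).trans Set.inter_subset_left

theorem obeyFam_eq_closedFam_of_quasiClosed [Finite X] {φ : Set X → Set X}
    {Sig : Set (Set X × Set X)} (hclosed : ClosedFam φ ⊆ ObeyFam Sig)
    (hquasi : ∀ Q, QuasiClosed φ Q → Q ∉ ObeyFam Sig) : ObeyFam Sig = ClosedFam φ := by
  refine Set.Subset.antisymm (fun S hS => ?_) hclosed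
  induction S using WellFoundedLT.induction with
  | _ S IH =>
    by_contra hne
    refine hquasi S ⟨hne, fun C hC => or_iff_not_imp_left.2 fun hSC => ?_⟩ hS
    exact IH _ (Set.inter_subset_left.ssubset_of_not_subset fun h => hSC (h.trans
      Set.inter_subset_right)) (inter_mem_obeyFam hS (hclosed hC))

theorem stmt11_general [Finite X] (φ : Set X → Set X) (hφ : IsClosureOp φ)
    (n : ℕ) (E : Fin n → Set X)
    (hE' : ∀ Q, QuasiClosed φ Q → ∃ i, φ Q = E i)
    (Sig : Fin n → Set (Set X × Set X))
    (hSig : ∀ i, ObeyFam (Sig i) = ClosedFam φ) :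
    ObeyFam (⋃ i, {p ∈ Sig i | φ p.1 = E i}) = ClosedFam φ := by
  refine obeyFam_eq_closedFam_of_quasiClosed (fun C hC => ?_) fun Q hQ hobeys => ?_
  · intro p hp
    obtain ⟨i, hp, -⟩ := Set.mem_iUnion.1 hp
    exact ((hSig i).symm ▸ hC : C ∈ ObeyFam (Sig i)) p hp
  · obtain ⟨i, hi⟩ := hE' Q hQ
    obtain ⟨p, hp, hpQ, hviol⟩ := hQ.exists_not_obeys hφ (hSig i)
    exact hviol (hobeys p (Set.mem_iUnion.2 ⟨i, hp, hpQ.trans hi⟩))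

theorem stmt11 [Finite X] (φ : Set X → Set X) (hφ : IsClosureOp φ)
    (n : ℕ) (E : Fin n → Set X)
    (hE : ∀ i, ∃ Q, QuasiClosed φ Q ∧ φ Q = E i)
    (hE' : ∀ Q, QuasiClosed φ Q → ∃ i, φ Q = E i)
    (Sig : Fin n → Set (Set X × Set X))
    (hSig : ∀ i, ObeyFam (Sig i) = ClosedFam φ) :
    ObeyFam (⋃ i, {p ∈ Sig i | φ p.1 = E i}) = ClosedFam φ :=
  stmt11_general φ hφ n E hE' Sig hSig
end

section
/- Let (X, φ) be a finite closure system with essential sets E₁, …, Eₙ, and suppose Σ₁ and Σ₂ are bases of (X, φ). Fix an index i, and let Σ = {(A → B) ∈ Σ₂ : φ(A) = Eᵢ} ∪ {(A → B) ∈ Σ₁ : φ(A) ≠ Eᵢ}. Then Σ is a basis of (X, φ). -/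
variable {X : Type*}

/-!
The family of closed sets always obeys the mixed set of implications, since it obeys both bases.
Conversely, take a set `S` that obeys the mixed set, is not closed, and is minimal with these
properties. Intersections with closed sets still obey the mixed set, so by minimality every
proper trace `S ∩ C` of a closed set `C` is closed. An implication of `Σ₁` that `S` fails must
have premise closure `E`; if `S ⊄ E` the closed trace `S ∩ E` would make `S` obey all of `Σ₁`,
so `φ S = E`. An implication `A → B` of `Σ₂` that `S` fails then has `φ A ≠ E`, hence
`S ⊄ φ A`, and the closed trace `S ∩ φ A` forces `B ⊆ S`, a contradiction.
-/

namespace IsClosureOp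

variable {φ : Set X → Set X}

lemma subset_closure (hφ : IsClosureOp φ) (A : Set X) : A ⊆ φ A := hφ.1 A

lemma closure_mono (hφ : IsClosureOp φ) {A B : Set X} (h : A ⊆ B) : φ A ⊆ φ B := hφ.2.1 A B h

lemma closure_mem_closedFam (hφ : IsClosureOp φ) (A : Set X) : φ A ∈ ClosedFam φ := hφ.2.2 A

lemma closure_subset_of_mem_closedFam (hφ : IsClosureOp φ) {A C : Set X} (hAC : A ⊆ C)
    (hC : C ∈ ClosedFam φ) : φ A ⊆ C :=
  (hφ.closure_mono hAC).trans hC.subset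

end IsClosureOp

section Basis

variable {φ : Set X → Set X} {T : Set (Set X × Set X)}

lemma obeys_of_mem_closedFam (hT : ObeyFam T = ClosedFam φ) {C : Set X}
    (hC : C ∈ ClosedFam φ) {p : Set X × Set X} (hp : p ∈ T) : Obeys C p := by
  rw [← hT] at hC
  exact hC p hp

lemma exists_not_obeys_of_not_mem_closedFam (hT : ObeyFam T = ClosedFam φ) {S : Set X}
    (hS : S ∉ ClosedFam φ) : ∃ p ∈ T, p.1 ⊆ S ∧ ¬ p.2 ⊆ S := by
  rw [← hT] at hS
  simpa [ObeyFam, Obeys] using hS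

lemma snd_subset_closure_fst (hφ : IsClosureOp φ) (hT : ObeyFam T = ClosedFam φ)
    {p : Set X × Set X} (hp : p ∈ T) : p.2 ⊆ φ p.1 :=
  obeys_of_mem_closedFam hT (hφ.closure_mem_closedFam _) hp (hφ.subset_closure _)

lemma snd_subset_of_inter_closure_mem_closedFam (hφ : IsClosureOp φ)
    (hT : ObeyFam T = ClosedFam φ) {p : Set X × Set X} (hp : p ∈ T) {S : Set X}
    (hpS : p.1 ⊆ S) (hC : S ∩ φ p.1 ∈ ClosedFam φ) : p.2 ⊆ S :=
  (obeys_of_mem_closedFam hT hC hp (Set.subset_inter hpS (hφ.subset_closure _))).trans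
    Set.inter_subset_left

lemma inter_mem_obeyFam_s12 (hφ : IsClosureOp φ) {Sig : Set (Set X × Set X)}
    (hSig : ∀ p ∈ Sig, p.2 ⊆ φ p.1) {S C : Set X} (hS : S ∈ ObeyFam Sig)
    (hC : C ∈ ClosedFam φ) : S ∩ C ∈ ObeyFam Sig := fun p hp hpSC =>
  Set.subset_inter (hS p hp (hpSC.trans Set.inter_subset_left))
    ((hSig p hp).trans (hφ.closure_subset_of_mem_closedFam
      (hpSC.trans Set.inter_subset_right) hC))

variable {E S : Set X}

lemma closure_eq_of_not_mem_closedFam (hφ : IsClosureOp φ) (hT : ObeyFam T = ClosedFam φ)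
    (hSE : ∀ p ∈ T, φ p.1 ≠ E → Obeys S p)
    (htrace : ∀ C ∈ ClosedFam φ, ¬ S ⊆ C → S ∩ C ∈ ClosedFam φ)
    (hS : S ∉ ClosedFam φ) : φ S = E := by
  obtain ⟨p, hpT, hpS, hpS'⟩ := exists_not_obeys_of_not_mem_closedFam hT hS
  have hpE : φ p.1 = E := by_contra fun h => hpS' (hSE p hpT h hpS)
  have hEc : E ∈ ClosedFam φ := hpE ▸ hφ.closure_mem_closedFam _
  have hSsubE : S ⊆ E := by
    by_contra hSE'
    refine hS (hT ▸ fun q hq hqS => ?_)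
    by_cases hqE : φ q.1 = E
    · exact snd_subset_of_inter_closure_mem_closedFam hφ hT hq hqS (hqE ▸ htrace E hEc hSE')
    · exact hSE q hq hqE hqS
  exact (hφ.closure_subset_of_mem_closedFam hSsubE hEc).antisymm (hpE ▸ hφ.closure_mono hpS)

lemma mem_closedFam_of_closure_eq (hφ : IsClosureOp φ) (hT : ObeyFam T = ClosedFam φ)
    (hSE : ∀ p ∈ T, φ p.1 = E → Obeys S p)
    (htrace : ∀ C ∈ ClosedFam φ, ¬ S ⊆ C → S ∩ C ∈ ClosedFam φ)
    (hφS : φ S = E) : S ∈ ClosedFam φ := by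
  by_contra hS
  obtain ⟨q, hqT, hqS, hqS'⟩ := exists_not_obeys_of_not_mem_closedFam hT hS
  have hqE : φ q.1 ≠ E := fun h => hqS' (hSE q hqT h hqS)
  have hSq : ¬ S ⊆ φ q.1 := fun h =>
    hqE ((hφS ▸ hφ.closure_mono hqS).antisymm
      (hφS ▸ hφ.closure_subset_of_mem_closedFam h (hφ.closure_mem_closedFam _)))
  exact hqS' (snd_subset_of_inter_closure_mem_closedFam hφ hT hqT hqS
    (htrace _ (hφ.closure_mem_closedFam _) hSq))

end Basis

theorem mem_closedFam_of_mem_obeyFam_swap [Finite X] {φ : Set X → Set X}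
    (hφ : IsClosureOp φ) {T₁ T₂ : Set (Set X × Set X)}
    (h₁ : ObeyFam T₁ = ClosedFam φ) (h₂ : ObeyFam T₂ = ClosedFam φ) (E : Set X) {S : Set X}
    (hS : S ∈ ObeyFam ({p ∈ T₂ | φ p.1 = E} ∪ {p ∈ T₁ | φ p.1 ≠ E})) :
    S ∈ ClosedFam φ := by
  induction S using WellFoundedLT.induction with
  | ind S ih =>
  have hSig : ∀ p ∈ {p ∈ T₂ | φ p.1 = E} ∪ {p ∈ T₁ | φ p.1 ≠ E}, p.2 ⊆ φ p.1 := by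
    rintro p (⟨hp, -⟩ | ⟨hp, -⟩)
    exacts [snd_subset_closure_fst hφ h₂ hp, snd_subset_closure_fst hφ h₁ hp]
  have htrace : ∀ C ∈ ClosedFam φ, ¬ S ⊆ C → S ∩ C ∈ ClosedFam φ := fun C hC hSC =>
    ih _ (Set.inter_ssubset_left_iff.2 hSC) (inter_mem_obeyFam_s12 hφ hSig hS hC)
  by_contra hSc
  have hφS : φ S = E := closure_eq_of_not_mem_closedFam hφ h₁
    (fun p hp hpE => hS p (Or.inr ⟨hp, hpE⟩)) htrace hSc
  exact hSc (mem_closedFam_of_closure_eq hφ h₂ (fun p hp hpE => hS p (Or.inl ⟨hp, hpE⟩))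
    htrace hφS)

theorem stmt12_general [Finite X] (φ : Set X → Set X) (hφ : IsClosureOp φ)
    (E : Set X)
    (T₁ T₂ : Set (Set X × Set X))
    (h₁ : ObeyFam T₁ = ClosedFam φ) (h₂ : ObeyFam T₂ = ClosedFam φ) :
    ObeyFam ({p ∈ T₂ | φ p.1 = E} ∪ {p ∈ T₁ | φ p.1 ≠ E}) = ClosedFam φ := by
  refine subset_antisymm (fun S hS => mem_closedFam_of_mem_obeyFam_swap hφ h₁ h₂ E hS) ?_
  rintro S hS p (⟨hp, -⟩ | ⟨hp, -⟩)
  exacts [obeys_of_mem_closedFam h₂ hS hp, obeys_of_mem_closedFam h₁ hS hp]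

theorem stmt12 [Finite X] (φ : Set X → Set X) (hφ : IsClosureOp φ)
    (E : Set X) (hE : ∃ Q, QuasiClosed φ Q ∧ φ Q = E)
    (T₁ T₂ : Set (Set X × Set X))
    (h₁ : ObeyFam T₁ = ClosedFam φ) (h₂ : ObeyFam T₂ = ClosedFam φ) :
    ObeyFam ({p ∈ T₂ | φ p.1 = E} ∪ {p ∈ T₁ | φ p.1 ≠ E}) = ClosedFam φ :=
  stmt12_general φ hφ E T₁ T₂ h₁ h₂
end

section
/- (Guigues–Duquenne necessity, used in the paper.) Let (X, φ) be a finite closure system and Σ a basis for (X, φ). Then for every critical set C of (X, φ), there is an implication (A → B) ∈ Σ with σ(A) = C, where σ is the saturation operator; in particular φ(A) = φ(C) is an essential set. -/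
/-!
Since `C` is not closed, some implication `A → B` of `Σ` fails in `C`: `A ⊆ C` but `B ⊈ C`.
Testing the quasi-closed `C` against the closed set `φ A` gives `C ⊆ φ A`, since otherwise
`C ∩ φ A` would be a closed set containing `A` but not `B`; hence `φ A = φ C`.
The saturation `σ A ⊆ C` is not closed (it would contain `B`), so it is quasi-closed with the
same closure as `C`, and criticality of `C` forces `σ A = C`.
-/

variable {X : Type*}

theorem IsClosureOp.closure_eq_of_subset_of_subset_closure {φ : Set X → Set X}
    (hφ : IsClosureOp φ) {A C : Set X} (hAC : A ⊆ C) (hCA : C ⊆ φ A) : φ A = φ C :=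
  (hφ.2.1 _ _ hAC).antisymm (hφ.2.2 A ▸ hφ.2.1 _ _ hCA)

theorem exists_violated_of_notMem_obeyFam {Sig : Set (Set X × Set X)} {C : Set X}
    (hC : C ∉ ObeyFam Sig) : ∃ p ∈ Sig, p.1 ⊆ C ∧ ¬ p.2 ⊆ C := by
  simp only [ObeyFam, Obeys, Set.mem_ofPred_eq, not_forall] at hC
  obtain ⟨p, hp, hA, hB⟩ := hC
  exact ⟨p, hp, hA, hB⟩

section Basis

variable {φ : Set X → Set X} {Sig : Set (Set X × Set X)} {p : Set X × Set X}

theorem not_subset_of_violated (hbasis : ObeyFam Sig = ClosedFam φ) (hp : p ∈ Sig)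
    {C S : Set X} (hBC : ¬ p.2 ⊆ C) (hSC : S ⊆ C) (hS : S ∈ ClosedFam φ) : ¬ p.1 ⊆ S :=
  fun hAS => hBC (((hbasis ▸ hS : S ∈ ObeyFam Sig) p hp hAS).trans hSC)

theorem QuasiClosed.closure_eq_of_violated (hφ : IsClosureOp φ)
    (hbasis : ObeyFam Sig = ClosedFam φ) (hp : p ∈ Sig) {C : Set X} (hC : QuasiClosed φ C)
    (hAC : p.1 ⊆ C) (hBC : ¬ p.2 ⊆ C) : φ p.1 = φ C := by
  rcases hC.2 (φ p.1) (hφ.2.2 p.1) with hCA | hclosed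
  · exact hφ.closure_eq_of_subset_of_subset_closure hAC hCA
  · exact absurd (Set.subset_inter hAC (hφ.1 p.1))
      (not_subset_of_violated hbasis hp hBC Set.inter_subset_left hclosed)

theorem QuasiClosed.saturation_eq_of_violated (hφ : IsClosureOp φ) {σ : Set X → Set X}
    (hσ : IsClosureOp σ) (hσF : ClosedFam σ = ClosedFam φ ∪ {Q | QuasiClosed φ Q})
    (hbasis : ObeyFam Sig = ClosedFam φ) (hp : p ∈ Sig) {C : Set X} (hC : QuasiClosed φ C)
    (hcrit : ∀ S, QuasiClosed φ S → S ⊂ C → φ S ≠ φ C)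
    (hAC : p.1 ⊆ C) (hBC : ¬ p.2 ⊆ C) (hφA : φ p.1 = φ C) : σ p.1 = C := by
  have hCσ : σ C = C := (hσF ▸ Or.inr hC : C ∈ ClosedFam σ)
  have hsub : σ p.1 ⊆ C := hCσ ▸ hσ.2.1 _ _ hAC
  have hsat : σ p.1 ∈ ClosedFam φ ∪ {Q | QuasiClosed φ Q} := hσF ▸ hσ.2.2 p.1
  rcases hsat with hclosed | hquasi
  · exact absurd (hσ.1 p.1) (not_subset_of_violated hbasis hp hBC hsub hclosed)
  · by_contra hne
    refine hcrit _ hquasi (hsub.ssubset_of_ne hne) ?_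
    exact (hφ.2.1 _ _ hsub).antisymm (hφA ▸ hφ.2.1 _ _ (hσ.1 p.1))

end Basis

theorem stmt13_general (φ σ : Set X → Set X)
    (hφ : IsClosureOp φ) (hσ : IsClosureOp σ)
    (hσF : ClosedFam σ = ClosedFam φ ∪ {Q | QuasiClosed φ Q})
    (Sig : Set (Set X × Set X)) (hbasis : ObeyFam Sig = ClosedFam φ)
    (C : Set X) (hC : QuasiClosed φ C)
    (hcrit : ∀ S, QuasiClosed φ S → S ⊂ C → φ S ≠ φ C) :
    ∃ p ∈ Sig, σ p.1 = C ∧ φ p.1 = φ C := by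
  obtain ⟨p, hp, hAC, hBC⟩ := exists_violated_of_notMem_obeyFam (hbasis ▸ hC.1)
  have hφA := hC.closure_eq_of_violated hφ hbasis hp hAC hBC
  exact ⟨p, hp, hC.saturation_eq_of_violated hφ hσ hσF hbasis hp hcrit hAC hBC hφA, hφA⟩

theorem stmt13 [Finite X] (φ σ : Set X → Set X)
    (hφ : IsClosureOp φ) (hσ : IsClosureOp σ)
    (hσF : ClosedFam σ = ClosedFam φ ∪ {Q | QuasiClosed φ Q})
    (Sig : Set (Set X × Set X)) (hbasis : ObeyFam Sig = ClosedFam φ)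
    (C : Set X) (hC : QuasiClosed φ C)
    (hcrit : ∀ S, QuasiClosed φ S → S ⊂ C → φ S ≠ φ C) :
    ∃ p ∈ Sig, σ p.1 = C ∧ φ p.1 = φ C :=
  stmt13_general φ σ hφ hσ hσF Sig hbasis C hC hcrit
end

section
/- For a finite closure system (X, φ) with closed sets F and quasi-closed sets 𝒬, the family F ∪ 𝒬 is closed under pairwise intersection (and contains X), hence is the closed-set family of a closure operator σ on X. -/
variable {X : Type*}

/-!
Meeting a quasi-closed `Q` with a closed `R` gives `Q` itself or a closed set. For a second
quasi-closed `Q'`: either `Q ⊆ R`, or `Q ∩ R` is closed, and then `Q' ⊆ Q ∩ R` or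
`Q ∩ Q' ∩ R = Q' ∩ (Q ∩ R)` is closed; so `Q ∩ Q'` is closed or quasi-closed. On a finite type a
family containing `univ` and closed under binary intersections is closed under all intersections,
hence is the family of closed sets of a closure operator.
-/

namespace ClosureOperator

lemma isClosureOp (c : ClosureOperator (Set X)) : IsClosureOp c :=
  ⟨c.le_closure, fun _ _ h => c.monotone h, c.idempotent⟩

lemma closedFam_eq (c : ClosureOperator (Set X)) : ClosedFam c = {S | c.IsClosed S} :=
  Set.ext fun _ => c.isClosed_iff.symm

end ClosureOperator

lemma exists_isClosureOp_closedFam_eq [Finite X] {G : Set (Set X)} (huniv : Set.univ ∈ G)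
    (hG : InfClosed G) : ∃ σ : Set X → Set X, IsClosureOp σ ∧ ClosedFam σ = G :=
  let c := ClosureOperator.ofCompletePred (· ∈ G)
    fun s hs => hG.sInf_mem (Set.toFinite s) huniv hs
  ⟨c, c.isClosureOp, c.closedFam_eq⟩

namespace IsClosureOp

variable {φ : Set X → Set X}

lemma univ_mem_closedFam (hφ : IsClosureOp φ) : Set.univ ∈ ClosedFam φ :=
  (Set.subset_univ _).antisymm (hφ.1 _)

lemma inter_mem_closedFam_s14 (hφ : IsClosureOp φ) {S T : Set X} (hS : S ∈ ClosedFam φ)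
    (hT : T ∈ ClosedFam φ) : S ∩ T ∈ ClosedFam φ := by
  obtain ⟨hext, hmono, _⟩ := hφ
  refine subset_antisymm (Set.subset_inter ?_ ?_) (hext _)
  · exact (hmono _ _ Set.inter_subset_left).trans hS.subset
  · exact (hmono _ _ Set.inter_subset_right).trans hT.subset

end IsClosureOp

namespace QuasiClosed

variable {φ : Set X → Set X} {Q Q' S : Set X}

lemma inter_mem_of_mem_closedFam (hQ : QuasiClosed φ Q) (hS : S ∈ ClosedFam φ) :
    Q ∩ S ∈ ClosedFam φ ∪ {Q | QuasiClosed φ Q} := by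
  rcases hQ.2 S hS with hQS | hQS
  · rw [Set.inter_eq_left.2 hQS]
    exact Or.inr hQ
  · exact Or.inl hQS

lemma inter (hQ : QuasiClosed φ Q) (hQ' : QuasiClosed φ Q') (hnot : Q ∩ Q' ∉ ClosedFam φ) :
    QuasiClosed φ (Q ∩ Q') := by
  refine ⟨hnot, fun R hR => ?_⟩
  rcases hQ.2 R hR with hQR | hQR
  · exact Or.inl (Set.inter_subset_left.trans hQR)
  rcases hQ'.2 _ hQR with hQ'QR | hQ'QR
  · exact Or.inl fun x hx => (hQ'QR hx.2).2
  · have hassoc : Q ∩ Q' ∩ R = Q' ∩ (Q ∩ R) := by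
      rw [Set.inter_comm Q Q', Set.inter_assoc, Set.inter_left_comm]
    exact Or.inr (hassoc ▸ hQ'QR)

end QuasiClosed

lemma infClosed_closedFam_union_quasiClosed {φ : Set X → Set X} (hφ : IsClosureOp φ) :
    InfClosed (ClosedFam φ ∪ {Q | QuasiClosed φ Q}) := by
  rintro S (hS | hS) T (hT | hT)
  · exact Or.inl (hφ.inter_mem_closedFam_s14 hS hT)
  · rw [inf_comm]
    exact hT.inter_mem_of_mem_closedFam hS
  · exact hS.inter_mem_of_mem_closedFam hT
  · by_cases hST : S ∩ T ∈ ClosedFam φ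
    · exact Or.inl hST
    · exact Or.inr (hS.inter hT hST)

theorem stmt14 [Finite X] (φ : Set X → Set X) (hφ : IsClosureOp φ) :
    Set.univ ∈ ClosedFam φ ∪ {Q | QuasiClosed φ Q} ∧
    (∀ S ∈ ClosedFam φ ∪ {Q | QuasiClosed φ Q},
      ∀ T ∈ ClosedFam φ ∪ {Q | QuasiClosed φ Q},
        S ∩ T ∈ ClosedFam φ ∪ {Q | QuasiClosed φ Q}) ∧
    ∃ σ : Set X → Set X, IsClosureOp σ ∧
      ClosedFam σ = ClosedFam φ ∪ {Q | QuasiClosed φ Q} := by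
  have huniv : Set.univ ∈ ClosedFam φ ∪ {Q | QuasiClosed φ Q} := Or.inl hφ.univ_mem_closedFam
  have hinter := infClosed_closedFam_union_quasiClosed hφ
  exact ⟨huniv, fun _ hS _ hT => hinter hS hT, exists_isClosureOp_closedFam_eq huniv hinter⟩
end

section
/- (Resolution of Adaricheva–Nation Conjecture 67.) Let (X, φ) be a finite closure system, E an essential set of (X, φ), and Σ an optimal basis. If A₁ → B₁, …, Aₙ → Bₙ are all the implications of Σ with φ(Aᵢ) = E, then the sum |B₁| + ⋯ + |Bₙ| is the same for every optimal basis Σ (assuming the pairing can be chosen so that corresponding left sides have equal saturations, as guaranteed by Wild's theorem). -/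
/-!
Let `𝒬_E` be the family of quasi-closed sets with closure `E`. Replacing the implications of a
basis whose premises have closure `E` by any family of implications with premises of closure `E`
that refutes every member of `𝒬_E` gives again a basis; so the `E`-parts of optimal bases are
exactly the minimum-size such covers. Exchange arguments inside a minimum cover show: every
minimal member of `𝒬_E` is the saturation of some premise; a premise has the least size among
sets of closure `E` whose saturation lies below its own; and a premise whose saturation is not
a minimal member of `𝒬_E`, or is shared with another premise, has size `0`. Hence the total
premise size of a minimum cover is the sum, over the minimal members `P` of `𝒬_E`, of the
least size of a premise with saturation `P`. This does not depend on the cover, and neither does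
its total size, so the total conclusion size does not either.
-/

variable {X : Type*}

open scoped Classical

section

variable {φ : Set X → Set X} {E A B S : Set X} {T Γ R : Finset (Set X × Set X)}
  {p q γ δ : Set X × Set X}

theorem IsClosureOp.subset_apply (hφ : IsClosureOp φ) (A : Set X) : A ⊆ φ A := hφ.1 A

theorem IsClosureOp.mono (hφ : IsClosureOp φ) (h : A ⊆ B) : φ A ⊆ φ B := hφ.2.1 A B h

theorem IsClosureOp.idem (hφ : IsClosureOp φ) (A : Set X) : φ (φ A) = φ A := hφ.2.2 A

theorem IsClosureOp.apply_eq_of_subset_of_subset (hφ : IsClosureOp φ) (hA : φ A = E)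
    (hAB : A ⊆ B) (hBE : B ⊆ E) : φ B = E := by
  refine subset_antisymm ?_ (hA ▸ hφ.mono hAB)
  calc φ B ⊆ φ E := hφ.mono hBE
    _ = E := by rw [← hA, hφ.idem]

noncomputable def basisSize (T : Finset (Set X × Set X)) : ℕ := ∑ p ∈ T, (p.1.ncard + p.2.ncard)

theorem basisSize_insert_le (q : Set X × Set X) (T : Finset (Set X × Set X)) :
    basisSize (insert q T) ≤ q.1.ncard + q.2.ncard + basisSize T := by
  unfold basisSize
  by_cases hq : q ∈ T
  · rw [Finset.insert_eq_of_mem hq]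
    omega
  · rw [Finset.sum_insert hq]

theorem basisSize_erase_add (hp : p ∈ T) :
    basisSize (T.erase p) + (p.1.ncard + p.2.ncard) = basisSize T :=
  Finset.sum_erase_add T _ hp

def IsStableBelow (φ : Set X → Set X) (E S : Set X) : Prop :=
  ∀ C ⊆ S, φ C ⊂ E → φ C ⊆ S

/-- For `φ A = E` this is the saturation `σ A` of `A`: the least closed or quasi-closed set
containing `A`. -/
def saturation (φ : Set X → Set X) (E A : Set X) : Set X :=
  ⋂₀ {S | A ⊆ S ∧ S ⊆ E ∧ IsStableBelow φ E S}

/-- For a closure operator `φ` these are exactly the quasi-closed sets `Q` with `φ Q = E`. -/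
def quasiClosedOver (φ : Set X → Set X) (E : Set X) : Set (Set X) :=
  {S | S ⊂ E ∧ IsStableBelow φ E S ∧ φ S = E}

theorem subset_saturation : A ⊆ saturation φ E A :=
  Set.subset_sInter fun _ hS => hS.1

theorem saturation_subset (hAS : A ⊆ S) (hSE : S ⊆ E) (hS : IsStableBelow φ E S) :
    saturation φ E A ⊆ S :=
  Set.sInter_subset_of_mem ⟨hAS, hSE, hS⟩

theorem saturation_subset_of_subset (hA : A ⊆ E) : saturation φ E A ⊆ E :=
  saturation_subset hA subset_rfl fun _ _ hC => hC.subset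

theorem isStableBelow_saturation : IsStableBelow φ E (saturation φ E A) :=
  fun C hC hCE => Set.subset_sInter fun _ hS =>
    hS.2.2 C (hC.trans (Set.sInter_subset_of_mem hS)) hCE

theorem saturation_subset_of_mem_quasiClosedOver (hS : S ∈ quasiClosedOver φ E) (hAS : A ⊆ S) :
    saturation φ E A ⊆ S :=
  saturation_subset hAS hS.1.subset hS.2.1

theorem IsClosureOp.saturation_mem_quasiClosedOver (hφ : IsClosureOp φ) (hA : φ A = E)
    (hne : saturation φ E A ≠ E) : saturation φ E A ∈ quasiClosedOver φ E := by
  have hAE : saturation φ E A ⊆ E := saturation_subset_of_subset (hA ▸ hφ.subset_apply A)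
  exact ⟨Set.ssubset_iff_subset_ne.2 ⟨hAE, hne⟩, isStableBelow_saturation,
    hφ.apply_eq_of_subset_of_subset hA subset_saturation hAE⟩

structure IsCover (φ : Set X → Set X) (E : Set X) (Γ : Finset (Set X × Set X)) : Prop where
  closure_fst : ∀ p ∈ Γ, φ p.1 = E
  snd_subset : ∀ p ∈ Γ, p.2 ⊆ E
  refutes : ∀ S ∈ quasiClosedOver φ E, ∃ p ∈ Γ, p.1 ⊆ S ∧ ¬ p.2 ⊆ S

structure IsMinCover (φ : Set X → Set X) (E : Set X) (Γ : Finset (Set X × Set X)) : Prop where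
  isCover : IsCover φ E Γ
  basisSize_le : ∀ Δ, IsCover φ E Δ → basisSize Γ ≤ basisSize Δ

section Basis

variable (hT : ObeyFam (T : Set (Set X × Set X)) = ClosedFam φ)
include hT

theorem IsClosureOp.snd_subset_of_basis (hφ : IsClosureOp φ) (hp : p ∈ T) : p.2 ⊆ φ p.1 := by
  have hclosed : φ p.1 ∈ ObeyFam (T : Set (Set X × Set X)) := by
    rw [hT]
    exact hφ.idem p.1
  exact hclosed p hp (hφ.subset_apply p.1)

/-- If `φ C ⊂ E`, no implication with premise closure `E` fires inside `φ C`, so `S ∩ φ C` is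
closed. -/
theorem IsClosureOp.isStableBelow_of_obeys (hφ : IsClosureOp φ)
    (hS : ∀ p ∈ T, φ p.1 ≠ E → Obeys S p) : IsStableBelow φ E S := by
  intro C hCS hCE
  have hclosed : S ∩ φ C ∈ ObeyFam (T : Set (Set X × Set X)) := by
    intro p hp hpS
    have hpC : φ p.1 ⊆ φ C := by
      simpa only [hφ.idem] using hφ.mono (hpS.trans Set.inter_subset_right)
    have hpE : φ p.1 ≠ E := fun h => hCE.2 (h ▸ hpC)
    exact Set.subset_inter (hS p hp hpE (hpS.trans Set.inter_subset_left))
      ((hφ.snd_subset_of_basis hT hp).trans hpC)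
  rw [hT] at hclosed
  calc φ C ⊆ φ (S ∩ φ C) := hφ.mono (Set.subset_inter hCS (hφ.subset_apply C))
    _ = S ∩ φ C := hclosed
    _ ⊆ S := Set.inter_subset_left

theorem IsClosureOp.isCover_filter (hφ : IsClosureOp φ) :
    IsCover φ E (T.filter fun p => φ p.1 = E) where
  closure_fst p hp := (Finset.mem_filter.1 hp).2
  snd_subset p hp := (Finset.mem_filter.1 hp).2 ▸ hφ.snd_subset_of_basis hT (Finset.mem_filter.1 hp).1
  refutes S hS := by
    obtain ⟨hSE, hSstable, hSφ⟩ := hS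
    have hSopen : S ∉ ObeyFam (T : Set (Set X × Set X)) := by
      rw [hT]
      exact fun h => hSE.ne (h.symm.trans hSφ)
    simp only [ObeyFam, Obeys, Set.mem_ofPred_eq, not_forall] at hSopen
    obtain ⟨p, hp, hpS, hpS'⟩ := hSopen
    refine ⟨p, Finset.mem_filter.2 ⟨hp, ?_⟩, hpS, hpS'⟩
    by_contra hpE
    have hpE' : φ p.1 ⊂ E := Set.ssubset_iff_subset_ne.2 ⟨hSφ ▸ hφ.mono hpS, hpE⟩
    exact hpS' ((hφ.snd_subset_of_basis hT hp).trans (hSstable p.1 hpS hpE'))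

theorem IsClosureOp.basis_of_isCover (hφ : IsClosureOp φ) (hΓ : IsCover φ E Γ) :
    ObeyFam (↑(T.filter (fun p => ¬ φ p.1 = E) ∪ Γ) : Set (Set X × Set X)) = ClosedFam φ := by
  ext S
  constructor
  · intro hS
    have hlow : ∀ p ∈ T, φ p.1 ≠ E → Obeys S p := fun p hp hpE =>
      hS p (Finset.mem_union_left _ (Finset.mem_filter.2 ⟨hp, hpE⟩))
    show S ∈ ClosedFam φ
    rw [← hT]
    intro p hp hpS
    by_cases hpE : φ p.1 = E
    · suffices hES : E ⊆ S from (hφ.snd_subset_of_basis hT hp).trans (hpE ▸ hES)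
      by_contra hES
      have hQ : S ∩ E ∈ quasiClosedOver φ E :=
        ⟨⟨Set.inter_subset_right, fun h => hES (h.trans Set.inter_subset_left)⟩,
          fun C hC hCE => Set.subset_inter
            (hφ.isStableBelow_of_obeys hT hlow C (hC.trans Set.inter_subset_left) hCE) hCE.subset,
          hφ.apply_eq_of_subset_of_subset hpE
            (Set.subset_inter hpS (hpE ▸ hφ.subset_apply p.1)) Set.inter_subset_right⟩
      obtain ⟨q, hq, hqS, hqS'⟩ := hΓ.refutes _ hQ
      exact hqS' (Set.subset_inter
        (hS q (Finset.mem_union_right _ hq) (hqS.trans Set.inter_subset_left))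
        (hΓ.snd_subset q hq))
    · exact hlow p hp hpE hpS
  · intro hS p hp hpS
    rcases Finset.mem_union.1 hp with hp | hp
    · have hSobeys : S ∈ ObeyFam (T : Set (Set X × Set X)) := hT ▸ hS
      exact hSobeys p (Finset.mem_filter.1 hp).1 hpS
    · have hES : E ⊆ S := by
        simpa only [hΓ.closure_fst p hp, show φ S = S from hS] using hφ.mono hpS
      exact (hΓ.snd_subset p hp).trans hES

theorem IsClosureOp.isMinCover_filter (hφ : IsClosureOp φ)
    (hopt : ∀ T' : Finset (Set X × Set X),
      ObeyFam (T' : Set (Set X × Set X)) = ClosedFam φ → basisSize T ≤ basisSize T') :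
    IsMinCover φ E (T.filter fun p => φ p.1 = E) where
  isCover := hφ.isCover_filter hT
  basisSize_le Δ hΔ := by
    have hdisj : Disjoint (T.filter fun p => ¬ φ p.1 = E) Δ :=
      Finset.disjoint_left.2 fun p hp hpΔ => (Finset.mem_filter.1 hp).2 (hΔ.closure_fst p hpΔ)
    have hle := hopt _ (hφ.basis_of_isCover hT hΔ)
    have hsplit := Finset.sum_filter_add_sum_filter_not T (fun p => φ p.1 = E)
      (fun p => p.1.ncard + p.2.ncard)
    unfold basisSize at hle ⊢
    rw [Finset.sum_union hdisj] at hle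
    omega

end Basis

theorem IsCover.insert_sdiff (hΓ : IsCover φ E Γ) (hq : φ q.1 = E) (hqE : q.2 ⊆ E)
    (hR : ∀ p ∈ R, saturation φ E q.1 ⊆ saturation φ E p.1 ∧ p.2 ⊆ q.2) :
    IsCover φ E (insert q (Γ \ R)) where
  closure_fst := (Finset.forall_mem_insert _ _ _).2
    ⟨hq, fun p hp => hΓ.closure_fst p (Finset.sdiff_subset hp)⟩
  snd_subset := (Finset.forall_mem_insert _ _ _).2
    ⟨hqE, fun p hp => hΓ.snd_subset p (Finset.sdiff_subset hp)⟩
  refutes S hS := by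
    obtain ⟨p, hp, hpS, hpS'⟩ := hΓ.refutes S hS
    by_cases hpR : p ∈ R
    · obtain ⟨hsat, hsnd⟩ := hR p hpR
      refine ⟨q, Finset.mem_insert_self _ _, ?_, fun h => hpS' (hsnd.trans h)⟩
      exact subset_saturation.trans (hsat.trans (saturation_subset_of_mem_quasiClosedOver hS hpS))
    · exact ⟨p, Finset.mem_insert_of_mem (Finset.mem_sdiff.2 ⟨hp, hpR⟩), hpS, hpS'⟩

theorem IsCover.exists_saturation_eq (hφ : IsClosureOp φ) (hΓ : IsCover φ E Γ) {P : Set X}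
    (hP : Minimal (· ∈ quasiClosedOver φ E) P) : ∃ γ ∈ Γ, saturation φ E γ.1 = P := by
  obtain ⟨γ, hγ, hγP, -⟩ := hΓ.refutes P hP.prop
  have hsub : saturation φ E γ.1 ⊆ P := saturation_subset_of_mem_quasiClosedOver hP.prop hγP
  have hne : saturation φ E γ.1 ≠ E := fun h => hP.prop.1.2 (h ▸ hsub)
  exact ⟨γ, hγ, hP.eq_of_subset (hφ.saturation_mem_quasiClosedOver (hΓ.closure_fst γ hγ) hne) hsub⟩

theorem IsCover.coe_filter_image_saturation (hφ : IsClosureOp φ) (hΓ : IsCover φ E Γ) :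
    (((Γ.image fun γ => saturation φ E γ.1).filter (Minimal (· ∈ quasiClosedOver φ E)) :
      Finset (Set X)) : Set (Set X)) = {P | Minimal (· ∈ quasiClosedOver φ E) P} := by
  ext P
  simp only [Finset.coe_filter, Finset.mem_image, Set.mem_ofPred_eq]
  exact ⟨And.right, fun hP => ⟨hΓ.exists_saturation_eq hφ hP, hP⟩⟩

noncomputable def minPremiseCard (φ : Set X → Set X) (E P : Set X) : ℕ :=
  sInf (Set.ncard '' {A | φ A = E ∧ saturation φ E A ⊆ P})

namespace IsMinCover

variable (hΓ : IsMinCover φ E Γ)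
include hΓ

/-- The hypothesis on `R` makes `q` refute every set that a member of `R` refutes, so `q` may
replace `R` in the cover. -/
theorem basisSize_le_of_dominates (hRΓ : R ⊆ Γ) (hq : φ q.1 = E) (hqE : q.2 ⊆ E)
    (hR : ∀ p ∈ R, saturation φ E q.1 ⊆ saturation φ E p.1 ∧ p.2 ⊆ q.2) :
    basisSize R ≤ q.1.ncard + q.2.ncard := by
  have hmin := hΓ.basisSize_le _ (hΓ.isCover.insert_sdiff hq hqE hR)
  have hinsert := basisSize_insert_le q (Γ \ R)
  have hsplit : basisSize (Γ \ R) + basisSize R = basisSize Γ := Finset.sum_sdiff hRΓ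
  omega

theorem fst_ncard_le (hγ : γ ∈ Γ) (hA : φ A = E)
    (hsub : saturation φ E A ⊆ saturation φ E γ.1) : γ.1.ncard ≤ A.ncard := by
  have h := hΓ.basisSize_le_of_dominates (R := {γ}) (q := (A, γ.2))
    (Finset.singleton_subset_iff.2 hγ) hA (hΓ.isCover.snd_subset γ hγ)
    (by simpa only [Finset.mem_singleton, forall_eq] using ⟨hsub, subset_rfl⟩)
  simp only [basisSize, Finset.sum_singleton] at h
  omega

/-- Merge `γ` into `δ`: the implication `δ.1 → δ.2 ∪ γ.2` does the work of both. -/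
theorem fst_ncard_eq_zero_of_saturation_subset (hγ : γ ∈ Γ) (hδ : δ ∈ Γ) (hne : γ ≠ δ)
    (hsub : saturation φ E δ.1 ⊆ saturation φ E γ.1) : γ.1.ncard = 0 := by
  have h := hΓ.basisSize_le_of_dominates (R := {γ, δ}) (q := (δ.1, δ.2 ∪ γ.2))
    (Finset.insert_subset hγ (Finset.singleton_subset_iff.2 hδ)) (hΓ.isCover.closure_fst δ hδ)
    (Set.union_subset (hΓ.isCover.snd_subset δ hδ) (hΓ.isCover.snd_subset γ hγ))
    (by simpa only [Finset.mem_insert, Finset.mem_singleton, forall_eq_or_imp, forall_eq] using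
      ⟨⟨hsub, Set.subset_union_right⟩, subset_rfl, Set.subset_union_left⟩)
  have hunion := Set.ncard_union_le δ.2 γ.2
  simp only [basisSize, Finset.sum_pair hne] at h
  omega

theorem fst_ncard_eq_zero_of_saturation_eq (hγ : γ ∈ Γ) (h : saturation φ E γ.1 = E) :
    γ.1.ncard = 0 := by
  have hcover : IsCover φ E (Γ.erase γ) := by
    refine ⟨fun p hp => hΓ.isCover.closure_fst p (Finset.mem_of_mem_erase hp),
      fun p hp => hΓ.isCover.snd_subset p (Finset.mem_of_mem_erase hp), fun S hS => ?_⟩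
    obtain ⟨p, hp, hpS, hpS'⟩ := hΓ.isCover.refutes S hS
    refine ⟨p, Finset.mem_erase.2 ⟨?_, hp⟩, hpS, hpS'⟩
    rintro rfl
    exact hS.1.2 (h ▸ saturation_subset_of_mem_quasiClosedOver hS hpS)
  have hmin := hΓ.basisSize_le _ hcover
  have hsplit := basisSize_erase_add hγ
  omega

theorem fst_ncard_eq_zero_of_not_minimal (hφ : IsClosureOp φ) (hγ : γ ∈ Γ)
    (h : ¬ Minimal (· ∈ quasiClosedOver φ E) (saturation φ E γ.1)) : γ.1.ncard = 0 := by
  by_cases hE : saturation φ E γ.1 = E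
  · exact hΓ.fst_ncard_eq_zero_of_saturation_eq hγ hE
  have hmem := hφ.saturation_mem_quasiClosedOver (hΓ.isCover.closure_fst γ hγ) hE
  obtain ⟨Q, hQ, hQγ, hγQ⟩ : ∃ Q ∈ quasiClosedOver φ E,
      Q ⊆ saturation φ E γ.1 ∧ ¬ saturation φ E γ.1 ⊆ Q := by
    simpa [Minimal, hmem] using h
  obtain ⟨δ, hδ, hδQ, -⟩ := hΓ.isCover.refutes Q hQ
  have hδsat : saturation φ E δ.1 ⊆ Q := saturation_subset_of_mem_quasiClosedOver hQ hδQ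
  refine hΓ.fst_ncard_eq_zero_of_saturation_subset hγ hδ ?_ (hδsat.trans hQγ)
  rintro rfl
  exact hγQ hδsat

theorem fst_ncard_eq_minPremiseCard (hγ : γ ∈ Γ) :
    γ.1.ncard = minPremiseCard φ E (saturation φ E γ.1) := by
  have hmem : γ.1.ncard ∈ Set.ncard '' {A | φ A = E ∧ saturation φ E A ⊆ saturation φ E γ.1} :=
    ⟨γ.1, ⟨hΓ.isCover.closure_fst γ hγ, subset_rfl⟩, rfl⟩
  obtain ⟨A, ⟨hA, hAγ⟩, hAcard⟩ := Nat.sInf_mem ⟨_, hmem⟩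
  refine le_antisymm ?_ (Nat.sInf_le hmem)
  rw [minPremiseCard, ← hAcard]
  exact hΓ.fst_ncard_le hγ hA hAγ

theorem sum_fiber_fst_ncard (hφ : IsClosureOp φ) (hγ : γ ∈ Γ) :
    ∑ δ ∈ Γ with saturation φ E δ.1 = saturation φ E γ.1, δ.1.ncard =
      if Minimal (· ∈ quasiClosedOver φ E) (saturation φ E γ.1)
      then minPremiseCard φ E (saturation φ E γ.1) else 0 := by
  split_ifs with hmin
  · rw [Finset.sum_const_nat fun δ hδ => (Finset.mem_filter.1 hδ).2 ▸
      hΓ.fst_ncard_eq_minPremiseCard (Finset.mem_filter.1 hδ).1]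
    have hγfiber : γ ∈ Γ.filter fun δ => saturation φ E δ.1 = saturation φ E γ.1 :=
      Finset.mem_filter.2 ⟨hγ, rfl⟩
    rcases Finset.eq_singleton_or_nontrivial hγfiber with hsingle | hnt
    · rw [hsingle, Finset.card_singleton, one_mul]
    · obtain ⟨δ, hδ, hδγ⟩ := hnt.exists_ne γ
      obtain ⟨hδΓ, hδsat⟩ := Finset.mem_filter.1 hδ
      have hzero := hΓ.fst_ncard_eq_zero_of_saturation_subset hγ hδΓ hδγ.symm hδsat.le
      rw [← hΓ.fst_ncard_eq_minPremiseCard hγ, hzero, mul_zero]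
  · refine Finset.sum_eq_zero fun δ hδ => ?_
    obtain ⟨hδΓ, hδsat⟩ := Finset.mem_filter.1 hδ
    exact hΓ.fst_ncard_eq_zero_of_not_minimal hφ hδΓ (hδsat ▸ hmin)

theorem sum_fst_ncard_eq (hφ : IsClosureOp φ) :
    ∑ γ ∈ Γ, γ.1.ncard =
      ∑ P ∈ (Γ.image fun γ => saturation φ E γ.1).filter (Minimal (· ∈ quasiClosedOver φ E)),
        minPremiseCard φ E P := by
  rw [Finset.sum_filter]
  exact (Finset.sum_image' _ fun γ hγ => (hΓ.sum_fiber_fst_ncard hφ hγ).symm).symm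

omit hΓ in
theorem sum_snd_ncard_eq (hφ : IsClosureOp φ) {Γ₁ Γ₂ : Finset (Set X × Set X)}
    (hΓ₁ : IsMinCover φ E Γ₁) (hΓ₂ : IsMinCover φ E Γ₂) :
    ∑ p ∈ Γ₁, p.2.ncard = ∑ p ∈ Γ₂, p.2.ncard := by
  have hsize : basisSize Γ₁ = basisSize Γ₂ :=
    le_antisymm (hΓ₁.basisSize_le _ hΓ₂.isCover) (hΓ₂.basisSize_le _ hΓ₁.isCover)
  have hfst : ∑ p ∈ Γ₁, p.1.ncard = ∑ p ∈ Γ₂, p.1.ncard := by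
    rw [hΓ₁.sum_fst_ncard_eq hφ, hΓ₂.sum_fst_ncard_eq hφ, Finset.coe_injective
      ((hΓ₁.isCover.coe_filter_image_saturation hφ).trans
        (hΓ₂.isCover.coe_filter_image_saturation hφ).symm)]
  simp only [basisSize, Finset.sum_add_distrib] at hsize
  omega

end IsMinCover

end

open scoped Classical in
theorem stmt15_general (φ : Set X → Set X) (hφ : IsClosureOp φ)
    (E : Set X)
    (T₁ T₂ : Finset (Set X × Set X))
    (h₁ : ObeyFam (↑T₁ : Set (Set X × Set X)) = ClosedFam φ)
    (h₂ : ObeyFam (↑T₂ : Set (Set X × Set X)) = ClosedFam φ)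
    (opt₁ : ∀ T : Finset (Set X × Set X),
      ObeyFam (↑T : Set (Set X × Set X)) = ClosedFam φ →
      ∑ p ∈ T₁, (p.1.ncard + p.2.ncard) ≤ ∑ p ∈ T, (p.1.ncard + p.2.ncard))
    (opt₂ : ∀ T : Finset (Set X × Set X),
      ObeyFam (↑T : Set (Set X × Set X)) = ClosedFam φ →
      ∑ p ∈ T₂, (p.1.ncard + p.2.ncard) ≤ ∑ p ∈ T, (p.1.ncard + p.2.ncard)) :
    ∑ p ∈ T₁.filter (fun p => φ p.1 = E), p.2.ncard
      = ∑ p ∈ T₂.filter (fun p => φ p.1 = E), p.2.ncard :=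
  IsMinCover.sum_snd_ncard_eq hφ (hφ.isMinCover_filter h₁ opt₁) (hφ.isMinCover_filter h₂ opt₂)

open scoped Classical in
theorem stmt15 [Finite X] (φ : Set X → Set X) (hφ : IsClosureOp φ)
    (E : Set X) (hE : ∃ Q, QuasiClosed φ Q ∧ φ Q = E)
    (T₁ T₂ : Finset (Set X × Set X))
    (h₁ : ObeyFam (↑T₁ : Set (Set X × Set X)) = ClosedFam φ)
    (h₂ : ObeyFam (↑T₂ : Set (Set X × Set X)) = ClosedFam φ)
    (opt₁ : ∀ T : Finset (Set X × Set X),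
      ObeyFam (↑T : Set (Set X × Set X)) = ClosedFam φ →
      ∑ p ∈ T₁, (p.1.ncard + p.2.ncard) ≤ ∑ p ∈ T, (p.1.ncard + p.2.ncard))
    (opt₂ : ∀ T : Finset (Set X × Set X),
      ObeyFam (↑T : Set (Set X × Set X)) = ClosedFam φ →
      ∑ p ∈ T₂, (p.1.ncard + p.2.ncard) ≤ ∑ p ∈ T, (p.1.ncard + p.2.ncard)) :
    ∑ p ∈ T₁.filter (fun p => φ p.1 = E), p.2.ncard
      = ∑ p ∈ T₂.filter (fun p => φ p.1 = E), p.2.ncard :=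
  stmt15_general φ hφ E T₁ T₂ h₁ h₂ opt₁ opt₂
end
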